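/- Let p_n denote the number of words of length n over the alphabet {a, a⁻¹, b, b⁻¹} whose product in the free group F(a,b) is the identity and none of whose proper prefixes has product lying in the coset b⁻¹⟨a⟩, where ⟨a⟩ is the cyclic subgroup generated by a. Then the formal power series P(z) = Σ_{n≥0} p_n z^n ∈ ℚ[[z]] satisfies the quadratic equation 3z²·P² − P + 1 = 0; equivalently, P(z) = (1 − √(1 − 12z²))/(6z²). -/

import Mathlib

noncomputable section

/-- The evaluation of a letter from the alphabet `{a, a⁻¹, b, b⁻¹}` in the free
group `F(a,b)` on two generators. -/
def freeLetterVal (p : Fin 2 × Bool) : FreeGroup (Fin 2) :=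
  if p.2 then FreeGroup.of p.1 else (FreeGroup.of p.1)⁻¹

/-- `p_n`: the number of words of length `n` over `{a, a⁻¹, b, b⁻¹}` whose product in
the free group `F(a,b)` is the identity and none of whose nonempty prefixes has
product lying in the coset `b⁻¹⟨a⟩`. -/
def pCount (n : ℕ) : ℕ :=
  Nat.card {w : Fin n → Fin 2 × Bool //
    ((List.ofFn w).map freeLetterVal).prod = 1 ∧
    ∀ m, 0 < m → m ≤ n → ¬ ∃ j : ℤ,
      (((List.ofFn w).take m).map freeLetterVal).prod =
        (FreeGroup.of (1 : Fin 2))⁻¹ * FreeGroup.of (0 : Fin 2) ^ j}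

/-!
A word is a walk from `1` in the Cayley graph of `F(a,b)`, the 4-regular tree. Every element of
the coset `b⁻¹⟨a⟩` lies in the branch behind the vertex `b⁻¹`, so `p_n` counts the closed walks of
length `n` that never visit the neighbour `b⁻¹` of the root. Cutting such a walk at its first
return to `1` leaves a first step `x ≠ b⁻¹`, a closed excursion into the branch behind `x`, and a
shorter walk of the same kind; by the symmetry of the tree the excursions behind `x` are again
counted by `p`. Hence `p₀ = 1`, `p₁ = 0` and `p_{n+2} = 3 ∑_{i+j=n} p_i p_j`, i.e. `P = 1 + 3z²P²`.
-/

namespace FreeGroup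

open List

variable {α : Type*}

theorem mk_cons (x : α × Bool) (l : List (α × Bool)) : mk (x :: l) = mk [x] * mk l := by
  rw [mul_mk]; rfl

theorem mk_cons_cons_not (x : α) (b : Bool) (l : List (α × Bool)) :
    mk ((x, b) :: (x, !b) :: l) = mk l :=
  Quot.sound Red.Step.cons_not

theorem isReduced_pair_iff {s t : α × Bool} : IsReduced [s, t] ↔ t ≠ (s.1, !s.2) := by
  obtain ⟨i, b⟩ := s; obtain ⟨j, c⟩ := t
  simp only [isReduced_cons_cons, IsReduced.singleton, and_true, ne_eq, Prod.mk.injEq]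
  cases b <;> cases c <;> simp [eq_comm]

/-- `l` is a closed walk from `1` in the Cayley tree of `FreeGroup α` that never visits the
neighbour `mk [t]` of `1`. -/
def IsClosedAvoiding (t : α × Bool) (l : List (α × Bool)) : Prop :=
  mk l = 1 ∧ ∀ p, p <+: l → mk p ≠ mk [t]

theorem IsClosedAvoiding.append_cons_inj {a : α × Bool} {u₁ u₂ v₁ v₂ : List (α × Bool)}
    (h₁ : IsClosedAvoiding a u₁) (h₂ : IsClosedAvoiding a u₂)
    (h : u₁ ++ a :: v₁ = u₂ ++ a :: v₂) : u₁ = u₂ ∧ v₁ = v₂ := by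
  suffices hlen : u₁.length = u₂.length by
    obtain ⟨hu, hv⟩ := append_inj h hlen
    exact ⟨hu, (cons_inj_right a).1 hv⟩
  have key : ∀ {u₁ u₂ v₁ v₂ : List (α × Bool)}, IsClosedAvoiding a u₁ → IsClosedAvoiding a u₂ →
      u₁ ++ a :: v₁ = u₂ ++ a :: v₂ → ¬ u₁.length < u₂.length := by
    intro u₁ u₂ v₁ v₂ h₁ h₂ h hlt
    have hpre : u₁ ++ [a] <+: u₂ := prefix_of_prefix_length_le (l₃ := u₂ ++ a :: v₂)
      (by rw [← h]; simp) (prefix_append u₂ _) (by simpa using hlt)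
    exact h₂.2 _ hpre (by rw [← mul_mk, h₁.1, one_mul])
  exact le_antisymm (not_lt.1 (key h₂ h₁ h.symm)) (not_lt.1 (key h₁ h₂ h))

theorem isClosedAvoiding_append {t : α × Bool} {l₁ l₂ : List (α × Bool)} (h : mk l₁ = 1) :
    IsClosedAvoiding t (l₁ ++ l₂) ↔ IsClosedAvoiding t l₁ ∧ IsClosedAvoiding t l₂ := by
  have hmk : ∀ r, mk (l₁ ++ r) = mk r := fun r => by rw [← mul_mk, h, one_mul]
  refine ⟨fun ⟨hc, ha⟩ => ⟨⟨h, fun p hp => ha p (hp.trans (prefix_append _ _))⟩,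
    ⟨hmk l₂ ▸ hc, fun p hp => hmk p ▸ ha _ ((prefix_append_right_inj l₁).2 hp)⟩⟩, ?_⟩
  rintro ⟨⟨-, ha₁⟩, hc₂, ha₂⟩
  refine ⟨(hmk l₂).trans hc₂, fun p hp => ?_⟩
  rcases le_total p.length l₁.length with hle | hle
  · exact ha₁ p (prefix_of_prefix_length_le hp (prefix_append _ _) hle)
  · obtain ⟨r, rfl⟩ := prefix_of_prefix_length_le (prefix_append _ _) hp hle
    exact hmk r ▸ ha₂ r ((prefix_append_right_inj l₁).1 hp)

theorem mk_cons_append_not (x : α × Bool) {u : List (α × Bool)} (hu : mk u = 1) :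
    mk (x :: (u ++ [(x.1, !x.2)])) = 1 := by
  rw [mk_cons, ← mul_mk, hu, one_mul, mul_mk]
  exact mk_cons_cons_not x.1 x.2 []

variable [DecidableEq α]

theorem mk_singleton_ne_one (x : α × Bool) : mk [x] ≠ 1 := by
  rw [← toWord_injective.ne_iff, toWord_mk, toWord_one, reduce_singleton]
  exact cons_ne_nil _ _

theorem toWord_mk_cons (c : α × Bool) (l : List (α × Bool)) :
    (mk (c :: l)).toWord = c :: (mk l).toWord ∨
      (c.1, !c.2) :: (mk (c :: l)).toWord = (mk l).toWord := by
  rw [toWord_mk, toWord_mk, reduce.cons]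
  rcases reduce l with _ | ⟨d, t⟩
  · exact Or.inl rfl
  · dsimp only
    split_ifs with h
    · obtain ⟨h1, h2⟩ := h
      right
      rw [h2, Bool.not_not, h1]
    · exact Or.inl rfl

/-- In the Cayley tree of `FreeGroup α`, a walk passes through every vertex on the geodesic
from `1` to its endpoint. -/
theorem exists_prefix_mk_eq_of_prefix_toWord {l q : List (α × Bool)}
    (hq : q <+: (mk l).toWord) : ∃ p, p <+: l ∧ mk p = mk q := by
  induction l generalizing q with
  | nil =>
    rw [toWord_mk, reduce_nil, prefix_nil] at hq
    exact ⟨[], nil_prefix, hq ▸ rfl⟩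
  | cons c l ih =>
    rcases toWord_mk_cons c l with h | h
    · rw [h] at hq
      rcases prefix_cons_iff.1 hq with rfl | ⟨q', rfl, hq'⟩
      · exact ⟨[], nil_prefix, rfl⟩
      · obtain ⟨p, hp, hpq⟩ := ih hq'
        exact ⟨c :: p, cons_prefix_cons.2 ⟨rfl, hp⟩, by rw [mk_cons, hpq, ← mk_cons]⟩
    · obtain ⟨p, hp, hpq⟩ := ih (h ▸ cons_prefix_cons.2 ⟨rfl, hq⟩)
      refine ⟨c :: p, cons_prefix_cons.2 ⟨rfl, hp⟩, ?_⟩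
      rw [mk_cons, hpq, ← mk_cons, mk_cons_cons_not]

theorem exists_prefix_mk_eq_singleton_of_isReduced {l w : List (α × Bool)} {s : α × Bool}
    (hw : IsReduced (s :: w)) (h : mk l = mk (s :: w)) : ∃ p, p <+: l ∧ mk p = mk [s] := by
  refine exists_prefix_mk_eq_of_prefix_toWord ?_
  rw [h, toWord_mk, hw.reduce_eq]
  exact cons_prefix_cons.2 ⟨rfl, nil_prefix⟩

theorem isClosedAvoiding_nil (t : α × Bool) : IsClosedAvoiding t [] :=
  ⟨rfl, fun _ hp => by rw [prefix_nil.1 hp]; exact (mk_singleton_ne_one t).symm⟩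

/-- A walk to the neighbour `mk [a]` of `1` reaches it for the first time by a step `a` from
`1`. -/
theorem exists_eq_append_cons_isClosedAvoiding {w : List (α × Bool)} {a : α × Bool}
    (h : mk w = mk [a]) : ∃ u v, w = u ++ a :: v ∧ IsClosedAvoiding a u := by
  have hex : ∃ m, mk (w.take m) = mk [a] := ⟨w.length, by rwa [take_length]⟩
  have hmin : ∀ p, p <+: w → p.length < Nat.find hex → mk p ≠ mk [a] := fun p hp hlt heq =>
    Nat.find_min hex hlt (by rwa [← prefix_iff_eq_take.1 hp])
  obtain ⟨u, c, huc⟩ : ∃ u c, w.take (Nat.find hex) = u ++ [c] := by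
    refine (eq_nil_or_concat' _).resolve_left fun hnil => mk_singleton_ne_one a ?_
    rw [← Nat.find_spec hex, hnil]; rfl
  have hu_pre : u <+: w := (prefix_append u [c]).trans (huc ▸ take_prefix _ w)
  have hu_len : u.length < Nat.find hex := by
    have := congrArg length huc
    simp only [length_take, length_append, length_singleton] at this
    omega
  have hu_avoid : ∀ p, p <+: u → mk p ≠ mk [a] := fun p hp =>
    hmin p (hp.trans hu_pre) (hp.length_le.trans_lt hu_len)
  have huc_mk : mk u * mk [c] = mk [a] := by rw [mul_mk, ← huc, Nat.find_spec hex]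
  -- otherwise `u` ends at `a * c⁻¹`, behind `a`, and so visits `a` earlier
  obtain rfl : c = a := by
    by_contra hca
    have hu : mk u = mk [a, (c.1, !c.2)] := by
      rw [eq_mul_inv_of_mul_eq huc_mk, inv_mk, ← mk_cons]; rfl
    have hred : IsReduced [a, (c.1, !c.2)] := isReduced_pair_iff.2 fun h => hca (by
      simp only [Prod.ext_iff, Bool.not_inj_iff] at h; exact Prod.ext h.1 h.2)
    obtain ⟨p, hp, hpa⟩ := exists_prefix_mk_eq_singleton_of_isReduced hred hu
    exact hu_avoid p hp hpa
  refine ⟨u, w.drop (Nat.find hex), ?_, mul_eq_right.1 huc_mk, hu_avoid⟩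
  calc w = w.take (Nat.find hex) ++ w.drop (Nat.find hex) := (take_append_drop _ w).symm
    _ = u ++ c :: w.drop (Nat.find hex) := by rw [huc, append_assoc, singleton_append]

theorem isClosedAvoiding_loop_iff {t x : α × Bool} {u : List (α × Bool)}
    (hu : IsClosedAvoiding (x.1, !x.2) u) :
    IsClosedAvoiding t (x :: (u ++ [(x.1, !x.2)])) ↔ x ≠ t := by
  have hloop := mk_cons_append_not x hu.1
  refine ⟨fun h hxt => h.2 [x] (cons_prefix_cons.2 ⟨rfl, nil_prefix⟩) (hxt ▸ rfl), fun hxt => ?_⟩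
  refine ⟨hloop, fun p hp hpt => ?_⟩
  rcases prefix_cons_iff.1 hp with rfl | ⟨p', rfl, hp'⟩
  · exact mk_singleton_ne_one t hpt.symm
  rcases prefix_concat_iff.1 hp' with rfl | hp'
  · exact mk_singleton_ne_one t (hpt.symm.trans hloop)
  have hred : IsReduced [(x.1, !x.2), t] := isReduced_pair_iff.2 (by simpa using hxt.symm)
  have hpmk : mk p' = mk [(x.1, !x.2), t] := by
    rw [mk_cons] at hpt
    rw [eq_inv_mul_of_mul_eq hpt, inv_mk, mul_mk]; rfl
  obtain ⟨q, hq, hqx⟩ := exists_prefix_mk_eq_singleton_of_isReduced hred hpmk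
  exact hu.2 q (hq.trans hp') hqx

theorem isClosedAvoiding_cons_iff {t x : α × Bool} {w : List (α × Bool)} :
    IsClosedAvoiding t (x :: w) ↔ x ≠ t ∧ ∃ u v, w = u ++ (x.1, !x.2) :: v ∧
      IsClosedAvoiding (x.1, !x.2) u ∧ IsClosedAvoiding t v := by
  have hglue : ∀ {u v}, IsClosedAvoiding (x.1, !x.2) u →
      (IsClosedAvoiding t (x :: (u ++ (x.1, !x.2) :: v)) ↔ x ≠ t ∧ IsClosedAvoiding t v) :=
    fun {u v} hu => by
      have : x :: (u ++ (x.1, !x.2) :: v) = x :: (u ++ [(x.1, !x.2)]) ++ v := by simp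
      rw [this, isClosedAvoiding_append (mk_cons_append_not x hu.1),
        isClosedAvoiding_loop_iff hu]
  constructor
  · intro h
    have hw : mk w = mk [(x.1, !x.2)] := by
      rw [← mul_right_inj (mk [x]), ← mk_cons, h.1, mul_mk]
      exact (mk_cons_cons_not x.1 x.2 []).symm
    obtain ⟨u, v, rfl, hu⟩ := exists_eq_append_cons_isClosedAvoiding hw
    exact ⟨((hglue hu).1 h).1, u, v, rfl, hu, ((hglue hu).1 h).2⟩
  · rintro ⟨hxt, u, v, rfl, hu, hv⟩
    exact (hglue hu).2 ⟨hxt, hv⟩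

theorem reduce_map (φ : α × Bool ≃ α × Bool)
    (hφ : ∀ x, φ (x.1, !x.2) = ((φ x).1, !(φ x).2)) (l : List (α × Bool)) :
    reduce (l.map φ) = (reduce l).map φ := by
  induction l with
  | nil => rfl
  | cons c l ih =>
    rw [map_cons, reduce.cons, reduce.cons, ih]
    rcases reduce l with _ | ⟨d, t⟩
    · rfl
    · have hcancel : ((φ c).1 = (φ d).1 ∧ (φ c).2 = !(φ d).2) ↔ (c.1 = d.1 ∧ c.2 = !d.2) := by
        calc _ ↔ φ c = ((φ d).1, !(φ d).2) := Prod.ext_iff.symm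
          _ ↔ c = (d.1, !d.2) := by rw [← hφ, φ.injective.eq_iff]
          _ ↔ _ := Prod.ext_iff
      show (if (φ c).1 = (φ d).1 ∧ (φ c).2 = !(φ d).2 then t.map φ else φ c :: φ d :: t.map φ)
        = (if c.1 = d.1 ∧ c.2 = !d.2 then t else c :: d :: t).map φ
      by_cases h : c.1 = d.1 ∧ c.2 = !d.2
      · rw [if_pos (hcancel.2 h), if_pos h]
      · rw [if_neg (mt hcancel.1 h), if_neg h]; rfl

theorem mk_map_eq_mk_map_iff (φ : α × Bool ≃ α × Bool)
    (hφ : ∀ x, φ (x.1, !x.2) = ((φ x).1, !(φ x).2))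
    {l₁ l₂ : List (α × Bool)} :
    mk (l₁.map φ) = mk (l₂.map φ) ↔ mk l₁ = mk l₂ := by
  rw [← toWord_inj, toWord_mk, toWord_mk, reduce_map φ hφ, reduce_map φ hφ,
    (map_injective_iff.2 φ.injective).eq_iff, ← toWord_mk, ← toWord_mk, toWord_inj]

theorem isClosedAvoiding_map_iff (φ : α × Bool ≃ α × Bool)
    (hφ : ∀ x, φ (x.1, !x.2) = ((φ x).1, !(φ x).2))
    {t : α × Bool} {l : List (α × Bool)} :
    IsClosedAvoiding (φ t) (l.map φ) ↔ IsClosedAvoiding t l := by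
  have hclosed : mk (l.map φ) = 1 ↔ mk l = 1 := mk_map_eq_mk_map_iff φ hφ (l₂ := [])
  have hvisit : ∀ p, mk (p.map φ) = mk [φ t] ↔ mk p = mk [t] := fun p =>
    mk_map_eq_mk_map_iff φ hφ (l₂ := [t])
  simp only [IsClosedAvoiding, prefix_map_iff, hclosed, forall_exists_index, and_imp]
  refine and_congr_right fun _ => ⟨fun h p hp => (hvisit p).not.1 (h _ p hp rfl), ?_⟩
  rintro h - q hq rfl
  exact (hvisit q).not.2 (h q hq)

open Finset.HasAntidiagonal

def closedWordsAvoiding (t : α × Bool) (n : ℕ) : Set (List (α × Bool)) :=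
  {l | l.length = n ∧ IsClosedAvoiding t l}

instance [Finite α] (t : α × Bool) (n : ℕ) : Finite (closedWordsAvoiding t n) :=
  ((List.finite_length_eq (α × Bool) n).subset fun _ hl => hl.1).to_subtype

theorem ncard_closedWordsAvoiding_map (φ : α × Bool ≃ α × Bool)
    (hφ : ∀ x, φ (x.1, !x.2) = ((φ x).1, !(φ x).2)) (t : α × Bool) (n : ℕ) :
    (closedWordsAvoiding (φ t) n).ncard = (closedWordsAvoiding t n).ncard := by
  refine (Nat.card_congr (Equiv.subtypeEquiv (Equiv.listEquivOfEquiv φ) fun l => ?_)).symm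
  change _ ↔ (l.map φ).length = n ∧ IsClosedAvoiding (φ t) (l.map φ)
  rw [length_map, isClosedAvoiding_map_iff φ hφ]
  rfl

theorem ncard_closedWordsAvoiding_congr (s t : α × Bool) (n : ℕ) :
    (closedWordsAvoiding s n).ncard = (closedWordsAvoiding t n).ncard := by
  have hswap : ∀ b c y : Bool, Equiv.swap b c (!y) = !Equiv.swap b c y := by decide
  let φ := (Equiv.swap s.1 t.1).prodCongr (Equiv.swap s.2 t.2)
  have hφs : φ s = t := Prod.ext (Equiv.swap_apply_left _ _) (Equiv.swap_apply_left _ _)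
  rw [← ncard_closedWordsAvoiding_map φ (fun x => by simp [φ, hswap]) s n, hφs]

theorem ncard_closedWordsAvoiding_zero (t : α × Bool) : (closedWordsAvoiding t 0).ncard = 1 := by
  have : closedWordsAvoiding t 0 = {[]} := by
    ext l
    simp only [closedWordsAvoiding, Set.mem_ofPred_eq, length_eq_zero_iff, Set.mem_singleton_iff,
      and_iff_left_iff_imp]
    rintro rfl
    exact isClosedAvoiding_nil t
  rw [this, Set.ncard_singleton]

theorem ncard_closedWordsAvoiding_one (t : α × Bool) : (closedWordsAvoiding t 1).ncard = 0 := by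
  have : closedWordsAvoiding t 1 = ∅ := by
    ext l
    simp only [closedWordsAvoiding, Set.mem_ofPred_eq, length_eq_one_iff, Set.mem_empty_iff_false,
      iff_false, not_and]
    rintro ⟨c, rfl⟩ h
    exact mk_singleton_ne_one c h.1
  rw [this, Set.ncard_empty]

theorem ncard_closedWordsAvoiding_add_two [Fintype α] (t : α × Bool) (n : ℕ) :
    (closedWordsAvoiding t (n + 2)).ncard = (2 * Fintype.card α - 1) *
      ∑ ij ∈ antidiagonal n,
        (closedWordsAvoiding t ij.1).ncard * (closedWordsAvoiding t ij.2).ncard := by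
  let glue : (Σ x : {x // x ≠ t}, Σ ij : antidiagonal n,
      closedWordsAvoiding (x.1.1, !x.1.2) ij.1.1 × closedWordsAvoiding t ij.1.2) →
      closedWordsAvoiding t (n + 2) := fun ⟨x, ij, u, v⟩ =>
    ⟨x.1 :: (u.1 ++ (x.1.1, !x.1.2) :: v.1), by
      have := mem_antidiagonal.1 ij.2
      simp only [length_cons, length_append, u.2.1, v.2.1]; omega,
      isClosedAvoiding_cons_iff.2 ⟨x.2, u, v, rfl, u.2.2, v.2.2⟩⟩
  have hglue : Function.Bijective glue := by
    refine ⟨?_, ?_⟩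
    · rintro ⟨⟨x, hx⟩, ⟨⟨i, j⟩, hij⟩, ⟨u, hu⟩, ⟨v, hv⟩⟩
        ⟨⟨x', hx'⟩, ⟨⟨i', j'⟩, hij'⟩, ⟨u', hu'⟩, ⟨v', hv'⟩⟩ h
      obtain ⟨rfl, h⟩ := cons.inj (congrArg Subtype.val h)
      obtain ⟨rfl, rfl⟩ := hu.2.append_cons_inj hu'.2 h
      obtain rfl : i = i' := hu.1.symm.trans hu'.1
      obtain rfl : j = j' := hv.1.symm.trans hv'.1
      rfl
    · rintro ⟨_ | ⟨x, w⟩, hlen, hl⟩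
      · simp at hlen
      obtain ⟨hxt, u, v, rfl, hu, hv⟩ := isClosedAvoiding_cons_iff.1 hl
      refine ⟨⟨⟨x, hxt⟩, ⟨(u.length, v.length), ?_⟩, ⟨u, rfl, hu⟩, ⟨v, rfl, hv⟩⟩, rfl⟩
      simp only [length_cons, length_append] at hlen
      rw [mem_antidiagonal]; omega
  rw [← Nat.card_coe_set_eq, ← Nat.card_eq_of_bijective glue hglue]
  simp only [Nat.card_sigma, Nat.card_prod, Nat.card_coe_set_eq,
    ncard_closedWordsAvoiding_congr _ t, Finset.sum_coe_sort (antidiagonal n) fun ij =>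
      (closedWordsAvoiding t ij.1).ncard * (closedWordsAvoiding t ij.2).ncard]
  rw [Finset.sum_const, Finset.card_univ, smul_eq_mul]
  congr 1
  simp [Fintype.card_subtype_compl, Fintype.card_prod, mul_comm]

theorem closedWordsAvoiding_powerSeries_quadratic [Fintype α] {R : Type*} [CommRing R]
    (t : α × Bool) :
    ((2 * Fintype.card α - 1 : ℕ) : PowerSeries R) * PowerSeries.X ^ 2 *
        (PowerSeries.mk fun n => ((closedWordsAvoiding t n).ncard : R)) ^ 2
      - PowerSeries.mk (fun n => ((closedWordsAvoiding t n).ncard : R)) + 1 = 0 := by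
  set P := PowerSeries.mk fun n => ((closedWordsAvoiding t n).ncard : R)
  have hrw : ((2 * Fintype.card α - 1 : ℕ) : PowerSeries R) * PowerSeries.X ^ 2 * P ^ 2 =
      PowerSeries.X ^ 2 * (PowerSeries.C ((2 * Fintype.card α - 1 : ℕ) : R) * (P * P)) := by
    rw [map_natCast]; ring
  ext (_ | _ | n) <;>
    simp only [hrw, map_add, map_sub, PowerSeries.coeff_X_pow_mul', PowerSeries.coeff_C_mul,
      PowerSeries.coeff_one, PowerSeries.coeff_mk, map_zero, P]
  · simp [ncard_closedWordsAvoiding_zero]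
  · simp [ncard_closedWordsAvoiding_one]
  · rw [if_pos (by omega), PowerSeries.coeff_mul, ncard_closedWordsAvoiding_add_two]
    simp [Finset.mul_sum]

theorem exists_of_zpow_eq_mk_replicate (a : α) (j : ℤ) :
    ∃ k b, of a ^ j = mk (replicate k (a, b)) := by
  obtain ⟨k, rfl | rfl⟩ := Int.eq_nat_or_neg j
  · refine ⟨k, true, ?_⟩
    rw [zpow_natCast, ← toWord_of_pow, mk_toWord]
  · refine ⟨k, false, ?_⟩
    rw [zpow_neg, zpow_natCast, ← mk_toWord (x := of a ^ k), toWord_of_pow, inv_mk]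
    simp [invRev]

theorem isReduced_cons_replicate {s : α × Bool} {a : α} (h : s.1 ≠ a) (k : ℕ) (b : Bool) :
    IsReduced (s :: replicate k (a, b)) := by
  cases k with
  | zero => exact IsReduced.singleton
  | succ k =>
    rw [replicate_succ, isReduced_cons_cons]
    exact ⟨fun h' => absurd h' h, isReduced_iff_reduce_eq.2 (reduce_replicate (k + 1) (a, b))⟩

end FreeGroup

theorem freeLetterVal_eq_mk (s : Fin 2 × Bool) : freeLetterVal s = FreeGroup.mk [s] := by
  obtain ⟨i, _ | _⟩ := s
  · exact FreeGroup.inv_mk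
  · rfl

theorem prod_map_freeLetterVal (l : List (Fin 2 × Bool)) :
    (l.map freeLetterVal).prod = FreeGroup.mk l := by
  induction l with
  | nil => rfl
  | cons s l ih =>
    rw [List.map_cons, List.prod_cons, ih, freeLetterVal_eq_mk, ← FreeGroup.mk_cons]

theorem prefixes_avoid_coset_iff (l : List (Fin 2 × Bool)) :
    (∀ m, 0 < m → m ≤ l.length → ¬ ∃ j : ℤ, ((l.take m).map freeLetterVal).prod =
        (FreeGroup.of (1 : Fin 2))⁻¹ * FreeGroup.of (0 : Fin 2) ^ j) ↔
      ∀ p, p <+: l → FreeGroup.mk p ≠ FreeGroup.mk [((1 : Fin 2), false)] := by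
  have hb : (FreeGroup.of (1 : Fin 2))⁻¹ = FreeGroup.mk [((1 : Fin 2), false)] :=
    freeLetterVal_eq_mk (1, false)
  simp only [prod_map_freeLetterVal, hb]
  constructor
  · intro h p hp hpb
    have hlen : 0 < p.length := List.length_pos_iff.2 fun hnil =>
      FreeGroup.mk_singleton_ne_one _ (hpb.symm.trans (by rw [hnil]; rfl))
    refine h p.length hlen hp.length_le ⟨0, ?_⟩
    rw [← List.prefix_iff_eq_take.1 hp, hpb, zpow_zero, mul_one]
  · rintro h m - - ⟨j, hj⟩
    obtain ⟨k, b, hk⟩ := FreeGroup.exists_of_zpow_eq_mk_replicate (0 : Fin 2) j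
    rw [hk, FreeGroup.mul_mk, List.singleton_append] at hj
    obtain ⟨p, hp, hpb⟩ := FreeGroup.exists_prefix_mk_eq_singleton_of_isReduced
      (FreeGroup.isReduced_cons_replicate (by decide) k b) hj
    exact h p (hp.trans (List.take_prefix m l)) hpb

theorem pCount_eq_ncard (n : ℕ) :
    pCount n = (FreeGroup.closedWordsAvoiding ((1 : Fin 2), false) n).ncard := by
  have key : ∀ l : List (Fin 2 × Bool), l.length = n →
      (((l.map freeLetterVal).prod = 1 ∧ ∀ m, 0 < m → m ≤ n → ¬ ∃ j : ℤ,
        ((l.take m).map freeLetterVal).prod =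
          (FreeGroup.of (1 : Fin 2))⁻¹ * FreeGroup.of (0 : Fin 2) ^ j) ↔
        FreeGroup.IsClosedAvoiding ((1 : Fin 2), false) l) := by
    rintro l rfl
    rw [prod_map_freeLetterVal, prefixes_avoid_coset_iff]
    rfl
  refine (Nat.card_image_of_injective List.ofFn_injective {w | _}).symm.trans
    (congrArg (fun s : Set _ => Nat.card s) ?_)
  ext l
  simp only [Set.mem_image, Set.mem_ofPred_eq]
  constructor
  · rintro ⟨w, hw, rfl⟩
    exact ⟨List.length_ofFn, (key _ List.length_ofFn).1 hw⟩
  · rintro ⟨rfl, hl⟩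
    exact ⟨l.get, by rw [List.ofFn_get]; exact (key l rfl).2 hl, List.ofFn_get l⟩

open PowerSeries in
/-- The generating function `P(z) = Σ p_n z^n` satisfies `3z²·P² − P + 1 = 0`. -/
theorem freeGroup_L_words_quadratic :
    3 * X ^ 2 * (PowerSeries.mk fun n => (pCount n : ℚ)) ^ 2
      - (PowerSeries.mk fun n => (pCount n : ℚ)) + 1 = 0 := by
  have h := FreeGroup.closedWordsAvoiding_powerSeries_quadratic (R := ℚ) ((1 : Fin 2), false)
  simp only [← pCount_eq_ncard, Fintype.card_fin] at h
  exact h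

end
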